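/- A metrizable topological group G is NSS if and only if G contains no f_ω-Cauchy productive sequence. -/

import Mathlib

open Filter Topology

def LeftCauchy {G : Type*} [Group G] [TopologicalSpace G] (a : ℕ → G) : Prop :=
  ∀ U ∈ 𝓝 (1 : G), ∃ n : ℕ, ∀ k ≥ n, ∀ l ≥ n, (a k)⁻¹ * a l ∈ U

def partProd {G : Type*} [Monoid G] (b : ℕ → G) (n : ℕ) : G :=
  ((List.range n).map b).prod

def CauchyProductive {G : Type*} [Group G] [TopologicalSpace G] (b : ℕ → G) : Prop :=
  LeftCauchy (fun n => partProd b (n + 1))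

def NSS (G : Type*) [Group G] [TopologicalSpace G] : Prop :=
  ∃ U ∈ 𝓝 (1 : G), ∀ H : Subgroup G, (H : Set G) ⊆ U → H = ⊥

/-- A faithfully indexed sequence is `f_ω`-Cauchy productive if `fun n => a n ^ z n`
is Cauchy productive for every `z : ℕ → ℤ`. -/
def FOmegaCauchyProductive {G : Type*} [Group G] [TopologicalSpace G] (a : ℕ → G) : Prop :=
  Function.Injective a ∧ ∀ z : ℕ → ℤ, CauchyProductive (fun n => a n ^ z n)

/-!
If `U` witnesses NSS, every `x ≠ 1` has a power outside `U`; choosing such exponents `z n` for an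
injective sequence `a` makes `a n ^ z n` avoid `U` infinitely often, whereas the terms of a Cauchy
productive sequence tend to `1`.

Conversely, if `G` is not NSS, fix an antitone basis `W` of `𝓝 1` with `W (n+1) * W (n+1) ⊆ W n`
and pick `a n ≠ 1` whose powers all lie in `W n`. Any product of later terms
`b (k+1) * ⋯ * b (k+d)` with `b n ∈ W n` then lies in `W k`, which is the Cauchy condition for
`b n = a n ^ z n`. Injectivity is arranged by passing to a subsequence: since `G` is `T₁`, each
`a m` leaves `W n` for large `n`.
-/

open scoped Pointwise

section PartialProducts

variable {G : Type*} [Monoid G]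

theorem partProd_succ (b : ℕ → G) (n : ℕ) : partProd b (n + 1) = partProd b n * b n := by
  simp [partProd, List.range_succ]

theorem partProd_succ' (b : ℕ → G) (n : ℕ) :
    partProd b (n + 1) = b 0 * partProd (fun i => b (i + 1)) n := by
  simp [partProd, List.range_succ_eq_map, Function.comp_def]

theorem partProd_add (b : ℕ → G) (m d : ℕ) :
    partProd b (m + d) = partProd b m * partProd (fun i => b (m + i)) d := by
  simp [partProd, List.range_add, Function.comp_def]

theorem partProd_mem_of_mul_subset {W : ℕ → Set G} (hW : ∀ n, W (n + 1) * W (n + 1) ⊆ W n)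
    (h1 : ∀ n, (1 : G) ∈ W n) {c : ℕ → G} {k : ℕ} (hc : ∀ i, c i ∈ W (k + 1 + i)) (d : ℕ) :
    partProd c d ∈ W k := by
  induction d generalizing k c with
  | zero => simpa [partProd] using h1 k
  | succ d ih =>
    rw [partProd_succ']
    refine hW k (Set.mul_mem_mul (hc 0) (ih fun i => ?_))
    convert hc (i + 1) using 2
    omega

end PartialProducts

section CauchyProductive

variable {G : Type*} [Group G] [TopologicalSpace G]

theorem leftCauchy_of_forall_le [IsTopologicalGroup G] {a : ℕ → G}
    (h : ∀ U ∈ 𝓝 (1 : G), ∃ n, ∀ k ≥ n, ∀ l ≥ k, (a k)⁻¹ * a l ∈ U) : LeftCauchy a := by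
  intro U hU
  obtain ⟨n, hn⟩ := h (U ∩ U⁻¹) (inter_mem hU (inv_mem_nhds_one G hU))
  refine ⟨n, fun k hk l hl => ?_⟩
  rcases le_total k l with hkl | hlk
  · exact (hn k hk l hkl).1
  · simpa using (hn l hl k hlk).2

theorem CauchyProductive.tendsto_one {b : ℕ → G} (hb : CauchyProductive b) :
    Tendsto b atTop (𝓝 1) := by
  refine tendsto_atTop'.2 fun U hU => ?_
  obtain ⟨n, hn⟩ := hb U hU
  refine ⟨n + 1, fun m hm => ?_⟩
  obtain ⟨k, rfl⟩ : ∃ k, m = k + 1 := ⟨m - 1, by omega⟩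
  simpa [partProd_succ b (k + 1)] using hn k (by omega) (k + 1) (by omega)

theorem cauchyProductive_of_forall_mem [IsTopologicalGroup G] {W : ℕ → Set G}
    (hW : (𝓝 1).HasAntitoneBasis W) (hWmul : ∀ n, W (n + 1) * W (n + 1) ⊆ W n) {b : ℕ → G}
    (hb : ∀ n, b n ∈ W n) : CauchyProductive b := by
  refine leftCauchy_of_forall_le fun U hU => ?_
  obtain ⟨n, hn⟩ := eventually_atTop.1
    (hW.tendsto_smallSets.eventually (eventually_smallSets_subset.2 hU))
  refine ⟨n, fun k hk l hkl => hn k hk ?_⟩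
  obtain ⟨d, rfl⟩ := Nat.exists_eq_add_of_le hkl
  rw [add_right_comm, partProd_add b (k + 1), inv_mul_cancel_left]
  exact partProd_mem_of_mul_subset hWmul (fun n => mem_of_mem_nhds (hW.mem n)) (fun _ => hb _) d

end CauchyProductive

theorem exists_zpow_notMem_of_ne_one {G : Type*} [Group G] {U : Set G}
    (hU : ∀ H : Subgroup G, (H : Set G) ⊆ U → H = ⊥) {x : G} (hx : x ≠ 1) :
    ∃ k : ℤ, x ^ k ∉ U := by
  by_contra! h
  exact hx (Subgroup.zpowers_eq_bot.1 (hU _ (by rintro _ ⟨k, rfl⟩; exact h k)))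

section NSS

variable {G : Type*} [Group G] [TopologicalSpace G]

theorem exists_ne_one_forall_zpow_mem_of_not_NSS (hG : ¬ NSS G) {U : Set G} (hU : U ∈ 𝓝 1) :
    ∃ x ≠ 1, ∀ k : ℤ, x ^ k ∈ U := by
  simp only [NSS, not_exists, not_and, not_forall] at hG
  obtain ⟨H, hHU, hH⟩ := hG U hU
  obtain ⟨x, hxH, hx⟩ := H.bot_or_exists_ne_one.resolve_left hH
  exact ⟨x, hx, fun k => hHU (H.zpow_mem hxH k)⟩

theorem NSS.not_fOmegaCauchyProductive (hG : NSS G) (a : ℕ → G) :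
    ¬ FOmegaCauchyProductive a := by
  obtain ⟨U, hU, hUsub⟩ := hG
  rintro ⟨ha, hprod⟩
  have hexp : ∀ n, ∃ k : ℤ, a n ≠ 1 → a n ^ k ∉ U := fun n => by
    by_cases h : a n = 1
    · exact ⟨0, absurd h⟩
    · exact (exists_zpow_notMem_of_ne_one hUsub h).imp fun _ hk _ => hk
  choose z hz using hexp
  have hne : ∀ᶠ n in atTop, a n ≠ 1 :=
    Nat.cofinite_eq_atTop ▸ ha.tendsto_cofinite.eventually (eventually_cofinite_ne 1)
  obtain ⟨n, hn1, hnU⟩ := (hne.and ((hprod z).tendsto_one hU)).exists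
  exact hz n hn1 hnU

theorem exists_injective_forall_zpow_mem_of_not_NSS [T1Space G] (hG : ¬ NSS G)
    {W : ℕ → Set G} (hW : (𝓝 1).HasAntitoneBasis W) :
    ∃ a : ℕ → G, Function.Injective a ∧ ∀ n (k : ℤ), a n ^ k ∈ W n := by
  choose x hx1 hxW using fun n => exists_ne_one_forall_zpow_mem_of_not_NSS hG (hW.mem n)
  have hleave : ∀ m, ∃ m' > m, x m ∉ W m' := fun m =>
    ((eventually_gt_atTop m).and (hW.tendsto_smallSets.eventually
      (eventually_smallSets_subset.2 (compl_singleton_mem_nhds (hx1 m).symm)))).exists.imp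
      fun _ h => ⟨h.1, fun hm => h.2 hm rfl⟩
  choose g hg_gt hg_notMem using hleave
  have hφ : StrictMono fun n => g^[n] 0 := strictMono_nat_of_lt_succ fun n => by
    simpa [Function.iterate_succ_apply'] using hg_gt _
  refine ⟨fun n => x (g^[n] 0), Function.Injective.of_lt_imp_ne fun i j hij hxij => ?_,
    fun n k => hW.antitone (hφ.id_le n) (hxW _ k)⟩
  have hj : x (g^[j] 0) ∈ W (g^[i + 1] 0) :=
    hW.antitone (hφ.monotone hij) (by simpa using hxW _ 1)
  rw [Function.iterate_succ_apply', ← hxij] at hj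
  exact hg_notMem _ hj

theorem exists_fOmegaCauchyProductive_of_not_NSS [IsTopologicalGroup G] [FirstCountableTopology G]
    [T1Space G] (hG : ¬ NSS G) : ∃ a : ℕ → G, FOmegaCauchyProductive a := by
  obtain ⟨W, hW, hWmul⟩ := IsTopologicalGroup.exists_antitone_basis_nhds_one G
  obtain ⟨a, ha, haW⟩ := exists_injective_forall_zpow_mem_of_not_NSS hG hW
  exact ⟨a, ha, fun z => cauchyProductive_of_forall_mem hW hWmul fun n => haW n (z n)⟩

end NSS

/-- A metrizable topological group is NSS iff it contains no `f_ω`-Cauchy productive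
sequence. -/
theorem stmt_10 {G : Type*} [Group G] [TopologicalSpace G] [IsTopologicalGroup G]
    [TopologicalSpace.MetrizableSpace G] :
    NSS G ↔ ¬ ∃ a : ℕ → G, FOmegaCauchyProductive a :=
  ⟨fun hG ⟨a, ha⟩ => hG.not_fOmegaCauchyProductive a ha,
    fun h => by_contra fun hG => h (exists_fOmegaCauchyProductive_of_not_NSS hG)⟩
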